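/- Let f : V → W be a linear map of finite-dimensional real inner product spaces and let λ ≥ 0. Then F(f)(λ) = F(f*)(λ) + dim V − dim W, where F denotes the spectral density function. In particular F(f)(λ) − F(f)(0) = F(f*)(λ) − F(f*)(0). -/

import Mathlib

open scoped RealInnerProductSpace

variable {V E : Type*}

noncomputable def c1 [Fintype E] [DecidableEq V] (v0 v1 : E → V) :
    EuclideanSpace ℝ E →ₗ[ℝ] EuclideanSpace ℝ V where
  toFun a := WithLp.toLp 2 (fun v =>
    (∑ e ∈ Finset.univ.filter (fun e => v1 e = v), a e)
      - (∑ e ∈ Finset.univ.filter (fun e => v0 e = v), a e))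
  map_add' a b := by
    ext v
    simp [PiLp.add_apply, Finset.sum_add_distrib] <;> ring
  map_smul' c a := by
    ext v
    simp [PiLp.smul_apply, smul_eq_mul, ← Finset.mul_sum, mul_sub]

/-- Spectral density function of a linear map of inner product spaces. -/
noncomputable def sdf {V W : Type*} [NormedAddCommGroup V] [InnerProductSpace ℝ V]
    [NormedAddCommGroup W] [InnerProductSpace ℝ W]
    (f : V →ₗ[ℝ] W) (lam : ℝ) : ℕ :=
  sSup {n : ℕ | ∃ U : Submodule ℝ V, Module.finrank ℝ U = n ∧ ∀ v ∈ U, ‖f v‖ ≤ lam * ‖v‖}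

/-- Degree of a vertex in a finite directed multigraph (loops count twice). -/
def vdeg [Fintype E] [DecidableEq V] (v0 v1 : E → V) (v : V) : ℕ :=
  (Finset.univ.filter fun e => v0 e = v).card + (Finset.univ.filter fun e => v1 e = v).card

/-- Maximal vertex degree of a finite multigraph. -/
def maxDeg [Fintype V] [Fintype E] [DecidableEq V] (v0 v1 : E → V) : ℕ :=
  Finset.univ.sup (vdeg v0 v1)

/-- The simple graph underlying a directed multigraph. -/
def supportGraph (v0 v1 : E → V) : SimpleGraph V where
  Adj u w := u ≠ w ∧ ∃ e, (v0 e = u ∧ v1 e = w) ∨ (v0 e = w ∧ v1 e = u)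
  symm := ⟨by
    rintro u w ⟨h, e, he⟩
    exact ⟨h.symm, e, he.symm⟩⟩
  loopless := ⟨by rintro u ⟨h, _⟩; exact h rfl⟩

/-! If `‖f v‖ ≤ λ‖v‖` on a subspace `U`, then `‖f* w‖ ≤ λ‖w‖` on `(f*)⁻¹(U)`, because
`‖f* w‖² = ⟪w, f (f* w)⟫ ≤ λ‖w‖‖f* w‖`; and this preimage has codimension at most
`dim V - dim U` in `W`. Hence `F(f)(λ) + dim W ≤ F(f*)(λ) + dim V`, and applying this to `f*` as
well (`f** = f`) gives equality. -/

theorem Submodule.finrank_add_le_finrank_comap_add {K M N : Type*} [DivisionRing K]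
    [AddCommGroup M] [Module K M] [FiniteDimensional K M] [AddCommGroup N] [Module K N]
    [FiniteDimensional K N] (g : N →ₗ[K] M) (U : Submodule K M) :
    Module.finrank K U + Module.finrank K N ≤ Module.finrank K (U.comap g) + Module.finrank K M := by
  have hker : LinearMap.ker (U.mkQ ∘ₗ g) = U.comap g := by
    rw [LinearMap.ker_comp, Submodule.ker_mkQ]
  have rank_nullity := (U.mkQ ∘ₗ g).finrank_range_add_finrank_ker
  have range_le := (U.mkQ ∘ₗ g).range.finrank_le
  have quotient := U.finrank_quotient_add_finrank
  rw [hker] at rank_nullity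
  omega

section

variable {V W : Type*} [NormedAddCommGroup V] [InnerProductSpace ℝ V]
  [NormedAddCommGroup W] [InnerProductSpace ℝ W]

theorem sdf_bddAbove [FiniteDimensional ℝ V] (f : V →ₗ[ℝ] W) (lam : ℝ) :
    BddAbove {n : ℕ | ∃ U : Submodule ℝ V, Module.finrank ℝ U = n ∧ ∀ v ∈ U, ‖f v‖ ≤ lam * ‖v‖} :=
  ⟨Module.finrank ℝ V, fun _ ⟨U, hU, _⟩ => hU ▸ U.finrank_le⟩

theorem finrank_le_sdf [FiniteDimensional ℝ V] {f : V →ₗ[ℝ] W} {lam : ℝ} (U : Submodule ℝ V)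
    (hU : ∀ v ∈ U, ‖f v‖ ≤ lam * ‖v‖) : Module.finrank ℝ U ≤ sdf f lam :=
  le_csSup (sdf_bddAbove f lam) ⟨U, rfl, hU⟩

theorem exists_submodule_finrank_eq_sdf [FiniteDimensional ℝ V] (f : V →ₗ[ℝ] W) (lam : ℝ) :
    ∃ U : Submodule ℝ V, Module.finrank ℝ U = sdf f lam ∧ ∀ v ∈ U, ‖f v‖ ≤ lam * ‖v‖ :=
  Nat.sSup_mem (by exact ⟨0, ⊥, finrank_bot ℝ V, by simp⟩) (sdf_bddAbove f lam)

theorem norm_adjoint_apply_le_of_mem [FiniteDimensional ℝ V] [FiniteDimensional ℝ W]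
    {f : V →ₗ[ℝ] W} {lam : ℝ} (hlam : 0 ≤ lam) {U : Submodule ℝ V}
    (hU : ∀ v ∈ U, ‖f v‖ ≤ lam * ‖v‖) {w : W} (hw : f.adjoint w ∈ U) :
    ‖f.adjoint w‖ ≤ lam * ‖w‖ := by
  set v := f.adjoint w
  have hsq : ‖v‖ * ‖v‖ ≤ lam * ‖w‖ * ‖v‖ :=
    calc ‖v‖ * ‖v‖ = ⟪w, f v⟫ := by
          rw [← real_inner_self_eq_norm_mul_norm, LinearMap.adjoint_inner_left]
      _ ≤ ‖w‖ * ‖f v‖ := real_inner_le_norm _ _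
      _ ≤ ‖w‖ * (lam * ‖v‖) := by gcongr; exact hU v hw
      _ = lam * ‖w‖ * ‖v‖ := by ring
  rcases (norm_nonneg v).eq_or_lt with hv | hv
  · rw [← hv]; positivity
  · exact le_of_mul_le_mul_right hsq hv

theorem sdf_add_finrank_le [FiniteDimensional ℝ V] [FiniteDimensional ℝ W] (f : V →ₗ[ℝ] W)
    {lam : ℝ} (hlam : 0 ≤ lam) :
    sdf f lam + Module.finrank ℝ W ≤ sdf f.adjoint lam + Module.finrank ℝ V := by
  obtain ⟨U, hUdim, hU⟩ := exists_submodule_finrank_eq_sdf f lam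
  have hcomap := finrank_le_sdf (U.comap f.adjoint)
    fun _ hw => norm_adjoint_apply_le_of_mem hlam hU hw
  have hcodim := U.finrank_add_le_finrank_comap_add f.adjoint
  omega

end

/-- F(f)(λ) = F(f*)(λ) + dim V − dim W, and in particular
F(f)(λ) − F(f)(0) = F(f*)(λ) − F(f*)(0). -/
theorem sdf_adjoint {V W : Type*} [NormedAddCommGroup V] [InnerProductSpace ℝ V]
    [FiniteDimensional ℝ V] [NormedAddCommGroup W] [InnerProductSpace ℝ W]
    [FiniteDimensional ℝ W] (f : V →ₗ[ℝ] W) (lam : ℝ) (hlam : 0 ≤ lam) :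
    (sdf f lam : ℤ) = (sdf (LinearMap.adjoint f) lam : ℤ)
        + Module.finrank ℝ V - Module.finrank ℝ W ∧
    (sdf f lam : ℤ) - (sdf f 0 : ℤ)
      = (sdf (LinearMap.adjoint f) lam : ℤ) - (sdf (LinearMap.adjoint f) 0 : ℤ) := by
  have h := sdf_add_finrank_le f hlam
  have h0 := sdf_add_finrank_le f le_rfl
  have h' := sdf_add_finrank_le f.adjoint hlam
  have h0' := sdf_add_finrank_le f.adjoint le_rfl
  rw [LinearMap.adjoint_adjoint] at h' h0'
  constructor <;> omega
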